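/- Let P be a polynomial in the 2n complex variables (λ_1, …, λ_n, w_1, …, w_n) and set V(λ) = ∏_{1≤j<k≤n}(λ_j − λ_k). If there exists a continuous function Φ on 𝔻^n × 𝔻^n such that P(λ, w) = Φ(λ, w) · V(λ) · V(w) for all (λ, w) ∈ 𝔻^n × 𝔻^n, then V(λ)·V(w) divides P in the polynomial ring in 2n variables over ℂ. -/

import Mathlib

open MvPolynomial

/-- The open unit polydisc `𝔻^n ⊆ ℂ^n`. -/
def polydisc (n : ℕ) : Set (Fin n → ℂ) := {z | ∀ i, ‖z i‖ < 1}

/-- The Vandermonde product `V(λ) = ∏_{j<k} (λ_j − λ_k)`. -/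
def vandermondeProd (n : ℕ) (lam : Fin n → ℂ) : ℂ :=
  ∏ j : Fin n, ∏ k ∈ Finset.Ioi j, (lam j - lam k)

/-- The Vandermonde product in the first `n` of `2n` polynomial variables. -/
noncomputable def vandermondePolyL (n : ℕ) : MvPolynomial (Fin n ⊕ Fin n) ℂ :=
  ∏ j : Fin n, ∏ k ∈ Finset.Ioi j, (X (Sum.inl j) - X (Sum.inl k))

/-- The Vandermonde product in the last `n` of `2n` polynomial variables. -/
noncomputable def vandermondePolyR (n : ℕ) : MvPolynomial (Fin n ⊕ Fin n) ℂ :=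
  ∏ j : Fin n, ∏ k ∈ Finset.Ioi j, (X (Sum.inr j) - X (Sum.inr k))

/-!
If two of the `λ`'s (or two of the `w`'s) coincide, the factorisation forces `P` to vanish there.
So the polynomial obtained from `P` by substituting `X v` for `X u` vanishes on a box of infinite
sets (the polydisc), hence is zero, which means `X u - X v ∣ P`. The linear forms `X u - X v`,
`u < v`, are pairwise non-associated primes of the factorial ring `ℂ[λ, w]`, so their product
`V(λ) V(w)` divides `P` as well.
-/

namespace MvPolynomial

open Finset Function

variable {σ R : Type*} [CommRing R]

theorem eval_eq_zero_of_X_sub_X_dvd {u v : σ} {p : MvPolynomial σ R} (h : X u - X v ∣ p)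
    {z : σ → R} (hz : z u = z v) : eval z p = 0 := by
  obtain ⟨q, rfl⟩ := h
  simp [hz]

variable [DecidableEq σ]

theorem X_sub_X_dvd_sub_aeval_update (u v : σ) (p : MvPolynomial σ R) :
    X u - X v ∣ p - aeval (update X u (X v)) p := by
  induction p using MvPolynomial.induction_on with
  | C a => simp
  | add p q hp hq => simpa only [map_add, add_sub_add_comm] using dvd_add hp hq
  | mul_X p i hp =>
    have hi : X u - X v ∣ X i - update (X : σ → MvPolynomial σ R) u (X v) i := by
      rcases eq_or_ne i u with rfl | hiu
      · simp
      · simp [hiu]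
    -- `p X_i - p' X_i' = (p - p') X_i + p' (X_i - X_i')`, where `'` is the substitution
    have hsplit := dvd_add (hp.mul_right (X i)) (hi.mul_left (aeval (update X u (X v)) p))
    convert hsplit using 1
    simp only [map_mul, aeval_X]
    ring

theorem X_sub_X_dvd_iff_aeval_update_eq_zero {u v : σ} (huv : u ≠ v) {p : MvPolynomial σ R} :
    X u - X v ∣ p ↔ aeval (update (X : σ → MvPolynomial σ R) u (X v)) p = 0 := by
  refine ⟨?_, fun h => by simpa only [h, sub_zero] using X_sub_X_dvd_sub_aeval_update u v p⟩
  rintro ⟨q, rfl⟩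
  simp [update_of_ne huv.symm]

theorem eval_aeval_update_X (z : σ → R) (u v : σ) (p : MvPolynomial σ R) :
    eval z (aeval (update (X : σ → MvPolynomial σ R) u (X v)) p) = eval (update z u (z v)) p := by
  change aeval z (aeval _ p) = aeval _ p
  rw [comp_aeval_apply]
  congr 2
  ext i
  rw [apply_update (fun _ => aeval z)]
  simp

section IsDomain

variable [IsDomain R]

theorem prime_X_sub_X {u v : σ} (huv : u ≠ v) : Prime (X u - X v : MvPolynomial σ R) := by
  have hker : RingHom.ker (aeval (update (X : σ → MvPolynomial σ R) u (X v))) =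
      Ideal.span {(X u - X v : MvPolynomial σ R)} := by
    ext p
    rw [RingHom.mem_ker, Ideal.mem_span_singleton, X_sub_X_dvd_iff_aeval_update_eq_zero huv]
  rw [← Ideal.span_singleton_prime (sub_ne_zero.mpr (X_injective.ne huv)), ← hker]
  exact RingHom.ker_isPrime _

theorem eq_and_eq_or_eq_and_eq_of_X_sub_X_dvd {u v c d : σ} (hcd : c ≠ d)
    (h : (X u - X v : MvPolynomial σ R) ∣ X c - X d) : u = c ∧ v = d ∨ u = d ∧ v = c := by
  have hc := mt (eval_eq_zero_of_X_sub_X_dvd h (z := Pi.single c (1 : R)))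
  have hd := mt (eval_eq_zero_of_X_sub_X_dvd h (z := Pi.single d (1 : R)))
  simp only [map_sub, eval_X, Pi.single_eq_same, Pi.single_eq_of_ne hcd, Pi.single_eq_of_ne hcd.symm,
    Pi.single_apply, sub_zero, zero_sub, neg_eq_zero, one_ne_zero, not_false_eq_true,
    forall_const] at hc hd
  grind

theorem X_sub_X_dvd_of_eval_eq_zero {S : Set R} (hS : S.Infinite) {u v : σ} (huv : u ≠ v)
    {p : MvPolynomial σ R} (h : ∀ z : σ → R, (∀ i, z i ∈ S) → z u = z v → eval z p = 0) :
    X u - X v ∣ p := by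
  rw [X_sub_X_dvd_iff_aeval_update_eq_zero huv]
  refine funext_set (fun _ => S) (fun _ => hS) fun z hz => ?_
  rw [eval_aeval_update_X, map_zero]
  refine h _ (fun i => ?_) (by simp [update_of_ne huv.symm])
  rcases eq_or_ne i u with rfl | hiu
  · simpa using hz v trivial
  · simpa [hiu] using hz i trivial

theorem prod_prod_Ioi_X_sub_X_dvd [Fintype σ] [PartialOrder σ] [LocallyFiniteOrderTop σ]
    [UniqueFactorizationMonoid R] {p : MvPolynomial σ R} (h : ∀ u v, u < v → X u - X v ∣ p) :
    ∏ u, ∏ v ∈ Ioi u, (X u - X v : MvPolynomial σ R) ∣ p := by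
  classical
  rw [← prod_finset_product (univ.filter fun q : σ × σ => q.1 < q.2) univ Ioi (by simp)
    (f := fun q => X q.1 - X q.2)]
  refine prod_dvd_of_isRelPrime ?_ fun q hq => h _ _ (by simpa using hq)
  rintro ⟨u, v⟩ huv ⟨c, d⟩ hcd hne
  simp only [coe_filter, mem_univ, true_and, Set.mem_ofPred_eq] at huv hcd
  refine (prime_X_sub_X huv.ne).irreducible.isRelPrime_iff_not_dvd.mpr fun hdvd => hne ?_
  rcases eq_and_eq_or_eq_and_eq_of_X_sub_X_dvd hcd.ne hdvd with ⟨rfl, rfl⟩ | ⟨rfl, rfl⟩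
  · rfl
  · exact absurd huv hcd.not_gt

theorem prod_prod_Ioi_X_sub_X_dvd_of_eval_eq_mul [Fintype σ] [PartialOrder σ]
    [LocallyFiniteOrderTop σ] [UniqueFactorizationMonoid R] {S : Set R} (hS : S.Infinite)
    {p : MvPolynomial σ R} (Φ : (σ → R) → R)
    (h : ∀ z : σ → R, (∀ i, z i ∈ S) →
      eval z p = Φ z * eval z (∏ u, ∏ v ∈ Ioi u, (X u - X v : MvPolynomial σ R))) :
    ∏ u, ∏ v ∈ Ioi u, (X u - X v : MvPolynomial σ R) ∣ p := by
  refine prod_prod_Ioi_X_sub_X_dvd fun u v huv => X_sub_X_dvd_of_eval_eq_zero hS huv.ne ?_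
  intro z hz hzuv
  have hdvd : X u - X v ∣ ∏ u, ∏ v ∈ Ioi u, (X u - X v : MvPolynomial σ R) :=
    (dvd_prod_of_mem (fun v => X u - X v) (mem_Ioi.mpr huv)).trans
      (dvd_prod_of_mem (fun u => ∏ v ∈ Ioi u, (X u - X v)) (mem_univ u))
  rw [h z hz, eval_eq_zero_of_X_sub_X_dvd hdvd hzuv, mul_zero]

end IsDomain

end MvPolynomial

open Finset

/- `Fin n ⊕ Fin n` carries the disjoint-sum order, in which `inl j` and `inr k` are incomparable,
so the product over its pairs `u < v` is exactly `V(λ) V(w)`. -/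
theorem vandermondePolyL_mul_vandermondePolyR (n : ℕ) :
    vandermondePolyL n * vandermondePolyR n = ∏ u : Fin n ⊕ Fin n, ∏ v ∈ Ioi u, (X u - X v) := by
  simp [Fintype.prod_sum_type, vandermondePolyL, vandermondePolyR, Sum.Ioi_inl, Sum.Ioi_inr]

theorem eval_vandermondePolyL_mul_vandermondePolyR (n : ℕ) (lam w : Fin n → ℂ) :
    eval (Sum.elim lam w) (vandermondePolyL n * vandermondePolyR n) =
      vandermondeProd n lam * vandermondeProd n w := by
  simp [vandermondePolyL, vandermondePolyR, vandermondeProd]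

theorem vandermonde_dvd_of_continuous_factor_general (n : ℕ)
    (P : MvPolynomial (Fin n ⊕ Fin n) ℂ)
    (Φ : (Fin n → ℂ) × (Fin n → ℂ) → ℂ)
    (hfac : ∀ lam ∈ polydisc n, ∀ w ∈ polydisc n,
      eval (Sum.elim lam w) P = Φ (lam, w) * vandermondeProd n lam * vandermondeProd n w) :
    vandermondePolyL n * vandermondePolyR n ∣ P := by
  have hball : (Metric.ball (0 : ℂ) 1).Infinite :=
    infinite_of_mem_nhds 0 (Metric.ball_mem_nhds 0 one_pos)
  rw [vandermondePolyL_mul_vandermondePolyR]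
  refine prod_prod_Ioi_X_sub_X_dvd_of_eval_eq_mul hball (fun z => Φ (z ∘ Sum.inl, z ∘ Sum.inr))
    fun z hz => ?_
  have hpoly : ∀ s : Fin n → Fin n ⊕ Fin n, z ∘ s ∈ polydisc n := fun s i =>
    mem_ball_zero_iff.mp (hz (s i))
  have hP := hfac _ (hpoly Sum.inl) _ (hpoly Sum.inr)
  have hV := eval_vandermondePolyL_mul_vandermondePolyR n (z ∘ Sum.inl) (z ∘ Sum.inr)
  rw [Sum.elim_comp_inl_inr] at hP hV
  rw [hP, ← vandermondePolyL_mul_vandermondePolyR, hV, mul_assoc]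

/-- If a polynomial `P(λ, w)` in `2n` variables factors on `𝔻^n × 𝔻^n` as a continuous
function times `V(λ)·V(w)`, then `V(λ)·V(w)` divides `P` in the polynomial ring. -/
theorem vandermonde_dvd_of_continuous_factor (n : ℕ)
    (P : MvPolynomial (Fin n ⊕ Fin n) ℂ)
    (Φ : (Fin n → ℂ) × (Fin n → ℂ) → ℂ)
    (hΦ : ContinuousOn Φ (polydisc n ×ˢ polydisc n))
    (hfac : ∀ lam ∈ polydisc n, ∀ w ∈ polydisc n,
      eval (Sum.elim lam w) P = Φ (lam, w) * vandermondeProd n lam * vandermondeProd n w) :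
    vandermondePolyL n * vandermondePolyR n ∣ P :=
  vandermonde_dvd_of_continuous_factor_general n P Φ hfac
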